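/- arXiv:1109.4916 — 2 statements merged into one kernel-verified Lean document; each statement's English description precedes it below -/
import Mathlib

section
/- Let F be a field of characteristic p, u ≥ 0, and let A = { [[α^{p^u}, β],[0, α]] : α ∈ F, β ∈ F } ⊆ M₂(F). Then A is a subalgebra of M₂(F), and every x, y, z ∈ A satisfy the polynomial identity x·[y,z] = [y,z]·x^{p^u}, where [y,z] = yz − zy. -/
open Matrix

lemma tri_pow {F : Type*} [Field F] (a b c : F) (n : ℕ) :
    ∃ d, (!![a, b; 0, c]) ^ n = !![a ^ n, d; 0, c ^ n] := by
  induction n with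
  | zero => exact ⟨0, by simp [Matrix.one_fin_two]⟩
  | succ n ih =>
    obtain ⟨d, hd⟩ := ih
    refine ⟨a ^ n * b + d * c, ?_⟩
    rw [pow_succ, hd, Matrix.mul_fin_two]
    simp [pow_succ]

theorem stmt7 (F : Type*) [Field F] (p : ℕ) [Fact p.Prime] [CharP F p] (u : ℕ) :
    let A : Set (Matrix (Fin 2) (Fin 2) F) := {M | ∃ α β : F, M = !![α ^ p ^ u, β; 0, α]}
    (∀ x ∈ A, ∀ y ∈ A, x + y ∈ A ∧ x * y ∈ A) ∧
    (∀ x ∈ A, ∀ y ∈ A, ∀ z ∈ A, x * (y * z - z * y) = (y * z - z * y) * x ^ p ^ u) := by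
  intro A
  constructor
  · rintro x ⟨a, b, rfl⟩ y ⟨c, d, rfl⟩
    constructor
    · refine ⟨a + c, b + d, ?_⟩
      rw [add_pow_char_pow]
      ext i j
      fin_cases i <;> fin_cases j <;> simp
    · refine ⟨a * c, a ^ p ^ u * d + b * c, ?_⟩
      rw [Matrix.mul_fin_two, mul_pow]
      simp
  · rintro x ⟨a, b, rfl⟩ y ⟨c, d, rfl⟩ z ⟨e, f, rfl⟩
    obtain ⟨g, hg⟩ := tri_pow (a ^ p ^ u) b a (p ^ u)
    rw [hg, Matrix.mul_fin_two, Matrix.mul_fin_two]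
    ext i j
    fin_cases i <;> fin_cases j <;> simp [Matrix.mul_apply, Fin.sum_univ_two] <;> ring
end

section
/- Let A be a finite-dimensional algebra over a field, e an idempotent of the ambient matrix algebra M_n(K), and Γ₀ a convex set of diagonal-block indices (convex meaning: any path in the quiver between two indices of Γ₀ stays in Γ₀). Then for an upper block-triangular algebra A whose nonzero blocks respect the quiver, the map a ↦ eae is multiplicative: e(ab)e = (eae)(ebe) for all a, b ∈ A. -/
theorem stmt18 (K Q : Type*) [Field K] (n : ℕ)
    (blk : Fin n → Q) (E : Q → Q → Prop)
    (S : Subalgebra K (Matrix (Fin n) (Fin n) K))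
    (hS : ∀ M ∈ S, ∀ i j : Fin n, M i j ≠ 0 → Relation.ReflTransGen E (blk i) (blk j))
    (Γ₀ : Set Q) [DecidablePred (· ∈ Γ₀)]
    (hconv : ∀ u ∈ Γ₀, ∀ v ∈ Γ₀, ∀ w,
      Relation.ReflTransGen E u w → Relation.ReflTransGen E w v → w ∈ Γ₀) :
    let e : Matrix (Fin n) (Fin n) K :=
      Matrix.diagonal fun i => if blk i ∈ Γ₀ then 1 else 0
    ∀ a ∈ S, ∀ b ∈ S, e * (a * b) * e = (e * a * e) * (e * b * e) := by
  intro e a ha b hb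
  ext i j
  simp only [e, Matrix.mul_apply, Matrix.diagonal_apply, ite_mul, mul_ite, zero_mul,
    mul_zero, Finset.sum_ite_eq, Finset.sum_ite_eq', Finset.mem_univ, if_true]
  simp only [one_mul, mul_one]
  by_cases hi : blk i ∈ Γ₀ <;> by_cases hj : blk j ∈ Γ₀ <;>
    simp only [hi, hj, if_true, if_false, Finset.sum_const_zero, ite_self]
  refine Finset.sum_congr rfl fun k _ => ?_
  by_cases hk : blk k ∈ Γ₀
  · simp [hk]
  · simp only [hk, if_false]
    by_cases hak : a i k = 0
    · simp [hak]
    · by_cases hbk : b k j = 0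
      · simp [hbk]
      · exact absurd (hconv _ hi _ hj _ (hS a ha i k hak) (hS b hb k j hbk)) hk
end
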